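/- Let α > 0, t_0 < 0, and let (a_n)_{n≥1} be a sequence of strictly positive numbers with Σ_{n≥1} a_n² < ∞ satisfying c_n a_n a_{n+1} = a_n + c_{n−1} a_{n−1}² for all n ≥ 1 (with a_0 = 0), where c_n = 2^{αn}. Then X_n(t) := a_n/(t − t_0) defines a Leray solution of the unforced inviscid DN model on [0, ∞) whose energy Σ_{n≥1} X_n(t)² = (Σ_{n≥1} a_n²)/(t − t_0)² is strictly decreasing in t; in particular energy is not conserved (anomalous dissipation). -/

import Mathlib

/-!
Each `X_n(t) = a_n/(t - t₀)` has derivative `-a_n/(t - t₀)²`, and multiplying the recurrence by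
`-1/(t - t₀)²` turns it into the DN equation, so the self-similar profile is an exact solution.
Its energy is `(Σ a_n²)/(t - t₀)²`, which is strictly decreasing for `t > t₀` because `Σ a_n² > 0`;
being decreasing on `[0, ∞)` it is bounded by its value at `t = 0`.
-/

open Set

namespace Stmt15

theorem hasDerivAt_const_div_sub {c t₀ t : ℝ} (ht : t ≠ t₀) :
    HasDerivAt (fun s => c / (s - t₀)) (-c / (t - t₀) ^ 2) t := by
  have h := (hasDerivAt_id t).sub_const t₀
  simpa using (hasDerivAt_const t c).fun_div h (sub_ne_zero.mpr ht)

theorem neg_div_sq_eq_of_mul_mul_eq {K : Type*} [Field K] {p q x y z : K}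
    (h : p * y * z = y + q * x ^ 2) (τ : K) :
    -y / τ ^ 2 = q * (x / τ) ^ 2 - p * (y / τ) * (z / τ) :=
  calc -y / τ ^ 2 = (q * x ^ 2 - p * y * z) / τ ^ 2 := by rw [h]; ring
    _ = q * (x / τ) ^ 2 - p * (y / τ) * (z / τ) := by ring

theorem tsum_div_sq {ι : Type*} (f : ι → ℝ) (τ : ℝ) : ∑' n, (f n / τ) ^ 2 = (∑' n, f n ^ 2) / τ ^ 2 := by
  simp_rw [div_pow]
  exact tsum_div_const

theorem strictAntiOn_div_sq_sub {S : ℝ} (hS : 0 < S) (t₀ : ℝ) :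
    StrictAntiOn (fun t => S / (t - t₀) ^ 2) (Ioi t₀) := by
  intro s hs t _ hst
  have hs' : 0 < s - t₀ := sub_pos.mpr hs
  have hsq : (s - t₀) ^ 2 < (t - t₀) ^ 2 := by gcongr
  exact div_lt_div_of_pos_left hS (pow_pos hs' 2) hsq

theorem anomalous_dissipation (α t₀ : ℝ) (ht₀ : t₀ < 0)
    (a : ℕ → ℝ) (hpos : ∀ n : ℕ, 1 ≤ n → 0 < a n)
    (hsum : Summable fun n => (a (n + 1)) ^ 2)
    (hrec : ∀ n : ℕ, 1 ≤ n →
      (2 : ℝ) ^ (α * (n : ℝ)) * a n * a (n + 1)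
        = a n + (2 : ℝ) ^ (α * ((n : ℝ) - 1)) * (a (n - 1)) ^ 2) :
    (∀ n : ℕ, 1 ≤ n → ∀ t ∈ Ici (0 : ℝ),
      HasDerivWithinAt (fun s => a n / (s - t₀))
        ((2 : ℝ) ^ (α * ((n : ℝ) - 1)) * (a (n - 1) / (t - t₀)) ^ 2
          - (2 : ℝ) ^ (α * (n : ℝ)) * (a n / (t - t₀)) * (a (n + 1) / (t - t₀)))
        (Ici 0) t) ∧
    (∀ t ∈ Ici (0 : ℝ),
      (Summable fun n => (a (n + 1) / (t - t₀)) ^ 2) ∧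
      (∑' n, (a (n + 1) / (t - t₀)) ^ 2) = (∑' n, (a (n + 1)) ^ 2) / (t - t₀) ^ 2) ∧
    StrictAntiOn (fun t => ∑' n, (a (n + 1) / (t - t₀)) ^ 2) (Ici (0 : ℝ)) ∧
    (∃ M : ℝ, ∀ t ∈ Ici (0 : ℝ), (∑' n, (a (n + 1) / (t - t₀)) ^ 2) ≤ M) := by
  have hIci : Ici (0 : ℝ) ⊆ Ioi t₀ := Ici_subset_Ioi.mpr ht₀
  have hS : 0 < ∑' n, a (n + 1) ^ 2 :=
    hsum.tsum_pos (fun n => sq_nonneg _) 0 (pow_pos (hpos 1 le_rfl) 2)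
  have hanti : StrictAntiOn (fun t => ∑' n, (a (n + 1) / (t - t₀)) ^ 2) (Ici 0) := by
    simpa only [tsum_div_sq] using (strictAntiOn_div_sq_sub hS t₀).mono hIci
  refine ⟨fun n hn t ht => ?_, fun t _ => ⟨?_, tsum_div_sq _ _⟩, hanti,
    ⟨_, fun t ht => hanti.antitoneOn self_mem_Ici ht ht⟩⟩
  · rw [← neg_div_sq_eq_of_mul_mul_eq (hrec n hn)]
    exact (hasDerivAt_const_div_sub (hIci ht).ne').hasDerivWithinAt
  · simpa only [div_pow] using hsum.div_const ((t - t₀) ^ 2)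

end Stmt15
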